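/- Let B be a real p×q matrix, n ≥ 1, and k a positive divisor of n. If x ∈ ℝ^p and y ∈ ℝ^q satisfy B y = λ x and Bᵀ x = λ y, then the vector v indexed by (Fin (n/k) × Fin p) ⊕ (Fin k × Fin q), with v(inl (i,a)) = √k · x a and v(inr (j,b)) = √(n/k) · y b, satisfies F_k · v = (√n · λ) · v. -/

import Mathlib

open Matrix

/-- The matrix `F_k` of the generalization of Construction I: indexed by
`(Fin (n/k) × Fin p) ⊕ (Fin k × Fin q)`, with a copy of `B` between every `p`-block and every
`q`-block, and zero blocks otherwise. -/
def matF (p q n k : ℕ) (B : Matrix (Fin p) (Fin q) ℝ) :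
    Matrix ((Fin (n / k) × Fin p) ⊕ Fin k × Fin q) ((Fin (n / k) × Fin p) ⊕ Fin k × Fin q) ℝ :=
  Matrix.of fun a b =>
    match a, b with
    | Sum.inl (_, i), Sum.inr (_, j) => B i j
    | Sum.inr (_, j), Sum.inl (_, i) => B i j
    | _, _ => 0

theorem matF_mulVec_sumElim (p q n k : ℕ) (B : Matrix (Fin p) (Fin q) ℝ)
    (u : Fin p → ℝ) (w : Fin q → ℝ) :
    matF p q n k B *ᵥ Sum.elim (fun ia => u ia.2) (fun jb => w jb.2) =
      Sum.elim (fun ia => (k : ℝ) * (B *ᵥ w) ia.2)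
        (fun jb => ((n / k : ℕ) : ℝ) * (Bᵀ *ᵥ u) jb.2) := by
  ext (⟨i, a⟩ | ⟨j, b⟩) <;>
    simp [mulVec, dotProduct, Fintype.sum_sum_type, Fintype.sum_prod_type, matF]

theorem matF_eigenvector_general (p q n k : ℕ) (hk : k ∣ n)
    (B : Matrix (Fin p) (Fin q) ℝ) (x : Fin p → ℝ) (y : Fin q → ℝ) (l : ℝ)
    (hBy : B *ᵥ y = l • x) (hBTx : Bᵀ *ᵥ x = l • y) :
    matF p q n k B *ᵥ
        Sum.elim (fun ia => Real.sqrt k * x ia.2) (fun jb => Real.sqrt (n / k : ℕ) * y jb.2) =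
      (Real.sqrt n * l) •
        Sum.elim (fun ia => Real.sqrt k * x ia.2) (fun jb => Real.sqrt (n / k : ℕ) * y jb.2) := by
  have hsqrt_n : Real.sqrt n = Real.sqrt k * Real.sqrt (n / k : ℕ) := by
    rw [← Real.sqrt_mul k.cast_nonneg, ← Nat.cast_mul, Nat.mul_div_cancel' hk]
  have hsq_k := Real.mul_self_sqrt k.cast_nonneg
  have hsq_nk := Real.mul_self_sqrt (n / k).cast_nonneg
  have hF := matF_mulVec_sumElim p q n k B (Real.sqrt k • x) (Real.sqrt (n / k : ℕ) • y)
  rw [mulVec_smul, mulVec_smul, hBy, hBTx] at hF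
  refine hF.trans ?_
  ext (⟨i, a⟩ | ⟨j, b⟩)
  · simp only [Sum.elim_inl, Pi.smul_apply, smul_eq_mul, hsqrt_n]
    linear_combination -(Real.sqrt (n / k : ℕ) * l * x a) * hsq_k
  · simp only [Sum.elim_inr, Pi.smul_apply, smul_eq_mul, hsqrt_n]
    linear_combination -(Real.sqrt k * l * y b) * hsq_nk

/-- If `(x, y)` is an eigenvector of `[[0, B], [Bᵀ, 0]]` with eigenvalue `λ`, then the vector
`v` with `v(inl (i,a)) = √k · x a` and `v(inr (j,b)) = √(n/k) · y b` is an eigenvector of `F_k`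
with eigenvalue `√n · λ`. -/
theorem matF_eigenvector (p q n k : ℕ) (hn : 1 ≤ n) (hk : k ∣ n) (hk1 : 1 ≤ k)
    (B : Matrix (Fin p) (Fin q) ℝ) (x : Fin p → ℝ) (y : Fin q → ℝ) (l : ℝ)
    (hBy : B *ᵥ y = l • x) (hBTx : Bᵀ *ᵥ x = l • y) :
    matF p q n k B *ᵥ
        Sum.elim (fun ia => Real.sqrt k * x ia.2) (fun jb => Real.sqrt (n / k : ℕ) * y jb.2) =
      (Real.sqrt n * l) •
        Sum.elim (fun ia => Real.sqrt k * x ia.2) (fun jb => Real.sqrt (n / k : ℕ) * y jb.2) :=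
  matF_eigenvector_general p q n k hk B x y l hBy hBTx
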